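/- arXiv:2205.06950 — 2 statements merged into one kernel-verified Lean document; each statement's English description precedes it below -/
import Mathlib

section
/- For all real numbers a > 0, t1, t2, t3 with 0 ≤ t1 < t2 ≤ 1 and t3 ∈ [0,1], the hyperbolic identity sinh((t2 - t1)·a) · sinh(((1 - t3)·t1 + t3·t2)·a) = sinh((1 - t3)·(t2 - t1)·a) · sinh(t1·a) + sinh(t3·(t2 - t1)·a) · sinh(t2·a) holds. -/
theorem sinh_distortion_identity (a t1 t2 t3 : ℝ) (ha : 0 < a)
    (h1 : 0 ≤ t1) (h12 : t1 < t2) (h2 : t2 ≤ 1) (h30 : 0 ≤ t3) (h31 : t3 ≤ 1) :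
    Real.sinh ((t2 - t1) * a) * Real.sinh (((1 - t3) * t1 + t3 * t2) * a) =
      Real.sinh ((1 - t3) * (t2 - t1) * a) * Real.sinh (t1 * a) +
        Real.sinh (t3 * (t2 - t1) * a) * Real.sinh (t2 * a) := by
  have key : ∀ x y : ℝ, Real.sinh x * Real.sinh y =
      (Real.cosh (x + y) - Real.cosh (x - y)) / 2 := by
    intro x y
    rw [Real.cosh_add, Real.cosh_sub]; ring
  rw [key, key, key]
  have e1 : (t2 - t1) * a + ((1 - t3) * t1 + t3 * t2) * a
      = (t2 + t3 * (t2 - t1)) * a := by ring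
  have e2 : (t2 - t1) * a - ((1 - t3) * t1 + t3 * t2) * a
      = (t2 - 2 * t1 - t3 * (t2 - t1)) * a := by ring
  have e3 : (1 - t3) * (t2 - t1) * a + t1 * a = (t2 - t3 * (t2 - t1)) * a := by ring
  have e4 : (1 - t3) * (t2 - t1) * a - t1 * a
      = (t2 - 2 * t1 - t3 * (t2 - t1)) * a := by ring
  have e5 : t3 * (t2 - t1) * a + t2 * a = (t2 + t3 * (t2 - t1)) * a := by ring
  have e6 : t3 * (t2 - t1) * a - t2 * a = -((t2 - t3 * (t2 - t1)) * a) := by ring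
  rw [e1, e2, e3, e4, e5, e6, Real.cosh_neg]
  ring
end

section
/- For all real numbers a with 0 < a < π, all t1, t2 with 0 ≤ t1 < t2 ≤ 1, and all t3 ∈ [0,1], the trigonometric identity sin((t2 - t1)·a) · sin(((1 - t3)·t1 + t3·t2)·a) = sin((1 - t3)·(t2 - t1)·a) · sin(t1·a) + sin(t3·(t2 - t1)·a) · sin(t2·a) holds. -/
theorem sin_distortion_identity (a t1 t2 t3 : ℝ) (ha : 0 < a) (ha' : a < Real.pi)
    (h1 : 0 ≤ t1) (h12 : t1 < t2) (h2 : t2 ≤ 1) (h30 : 0 ≤ t3) (h31 : t3 ≤ 1) :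
    Real.sin ((t2 - t1) * a) * Real.sin (((1 - t3) * t1 + t3 * t2) * a) =
      Real.sin ((1 - t3) * (t2 - t1) * a) * Real.sin (t1 * a) +
        Real.sin (t3 * (t2 - t1) * a) * Real.sin (t2 * a) := by
  have key : ∀ u v s : ℝ, Real.sin (v - u) * Real.sin (u + s) =
      Real.sin (v - u - s) * Real.sin u + Real.sin s * Real.sin v := by
    intro u v s
    simp only [Real.sin_add, Real.sin_sub, Real.cos_add, Real.cos_sub]
    linear_combination Real.sin s * Real.sin v * Real.sin_sq_add_cos_sq u
  have h := key (t1 * a) (t2 * a) (t3 * (t2 - t1) * a)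
  rw [show (t2 - t1) * a = t2 * a - t1 * a by ring,
      show ((1 - t3) * t1 + t3 * t2) * a = t1 * a + t3 * (t2 - t1) * a by ring,
      show (1 - t3) * (t2 - t1) * a = t2 * a - t1 * a - t3 * (t2 - t1) * a by ring]
  exact h
end
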